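/- arXiv:1001.1945 — 6 statements merged into one kernel-verified Lean document; each statement's English description precedes it below -/
import Mathlib

section
/- Let B be a local ring with maximal ideal m_B, G a finite group acting on B, σ ∈ G, and I_G the ideal of B generated by {σ(b) − b : b ∈ B, σ ∈ G}. If I_G is a principal ideal of B, then there exists y ∈ B such that I_G is generated by σ(y) − y for a fixed generator σ (i.e., the augmentation ideal admits an augmentation generator). -/
/-!
Writing `g = σ ^ k`, each `g • b - b` telescopes into differences `σ • c - c`, so `I_G` is spanned
by the `σ • b - b` alone. In a local ring, a principal ideal `I` spanned by a set `S` is spanned by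
a single element of `S`: either some `s ∈ S` lies outside `𝔪 • I`, and then it is a unit multiple
of the generator, or `I ≤ 𝔪 • I` and Nakayama gives `I = 0`.
-/

open IsLocalRing

theorem smul_sub_self_mem_of_mem_zpowers {G M S : Type*} [Group G] [AddGroup M]
    [DistribMulAction G M] [SetLike S M] [AddSubgroupClass S M] {J : S} {σ : G}
    (hσ : ∀ b, σ • b - b ∈ J) {g : G} (hg : g ∈ Subgroup.zpowers σ) (b : M) :
    g • b - b ∈ J := by
  rw [Subgroup.zpowers_eq_closure] at hg
  induction hg using Subgroup.closure_induction generalizing b with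
  | mem g hg => exact (Set.mem_singleton_iff.mp hg) ▸ hσ b
  | one => simp
  | mul g h _ _ hg hh =>
    rw [mul_smul, ← sub_add_sub_cancel]
    exact add_mem (hg _) (hh b)
  | inv g _ hg =>
    simpa using neg_mem (hg (g⁻¹ • b))

theorem Ideal.span_smul_sub_self_eq_of_forall_mem_zpowers {G B : Type*} [Group G] [CommRing B]
    [MulSemiringAction G B] {σ : G} (hσ : ∀ g : G, g ∈ Subgroup.zpowers σ) :
    Ideal.span {x | ∃ (g : G) (b : B), x = g • b - b} =
      Ideal.span {x | ∃ b : B, x = σ • b - b} := by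
  refine le_antisymm (span_le.mpr ?_) (span_mono ?_)
  · rintro _ ⟨g, b, rfl⟩
    refine smul_sub_self_mem_of_mem_zpowers (fun b ↦ ?_) (hσ g) b
    exact subset_span ⟨b, rfl⟩
  · rintro _ ⟨b, rfl⟩
    exact ⟨σ, b, rfl⟩

theorem IsLocalRing.exists_mem_eq_span_singleton_of_isPrincipal {B : Type*} [CommRing B]
    [IsLocalRing B] {S : Set B} (hprin : (Ideal.span S).IsPrincipal) (hS : S.Nonempty) :
    ∃ s ∈ S, Ideal.span S = Ideal.span {s} := by
  obtain ⟨x, hx⟩ := hprin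
  rw [Ideal.submodule_span_eq] at hx
  by_cases hgen : ∃ s ∈ S, s ∉ maximalIdeal B • Ideal.span S
  · obtain ⟨s, hsS, hs⟩ := hgen
    obtain ⟨u, rfl⟩ :=
      Ideal.mem_span_singleton'.mp (hx ▸ Ideal.subset_span hsS : s ∈ Ideal.span {x})
    have hu : IsUnit u := by
      by_contra hu
      exact hs <| Submodule.smul_mem_smul ((mem_maximalIdeal _).mpr hu)
        (hx ▸ Ideal.mem_span_singleton_self x)
    exact ⟨_, hsS, by rw [hx, Ideal.span_singleton_mul_left_unit hu]⟩
  · push Not at hgen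
    have hbot : Ideal.span S = ⊥ :=
      Submodule.eq_bot_of_le_smul_of_le_jacobson_bot _ _ ⟨{x}, by simp [hx]⟩
        (Ideal.span_le.mpr hgen) (jacobson_eq_maximalIdeal ⊥ bot_ne_top).ge
    obtain ⟨s, hs⟩ := hS
    have hs0 : s = 0 := (Ideal.span_eq_bot.mp hbot) s hs
    exact ⟨s, hs, by rw [hbot, hs0, Ideal.span_singleton_eq_bot.mpr rfl]⟩

theorem exists_augmentation_generator_of_principal_general
    {B : Type*} [CommRing B] [IsLocalRing B]
    {G : Type*} [Group G] [MulSemiringAction G B]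
    (σ : G) (hσ : ∀ g : G, g ∈ Subgroup.zpowers σ)
    (IG : Ideal B) (hIG : IG = Ideal.span {x | ∃ (g : G) (b : B), x = g • b - b})
    (hprin : IG.IsPrincipal) :
    ∃ y : B, IG = Ideal.span {σ • y - y} := by
  rw [hIG, Ideal.span_smul_sub_self_eq_of_forall_mem_zpowers hσ] at hprin ⊢
  obtain ⟨_, ⟨y, rfl⟩, hy⟩ :=
    exists_mem_eq_span_singleton_of_isPrincipal hprin ⟨0, 0, by simp⟩
  exact ⟨y, hy⟩

/-- If the augmentation ideal of a `p`-cyclic action on a local ring is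
principal, then it admits an augmentation generator: there is `y ∈ B` with
`I_G = B·(σ • y − y)` for the fixed generator `σ` of `G`. -/
theorem exists_augmentation_generator_of_principal
    {B : Type*} [CommRing B] [IsLocalRing B]
    {G : Type*} [Group G] [Fintype G] [MulSemiringAction G B]
    (p : ℕ) (hp : p.Prime) (hcard : Nat.card G = p)
    (hloc : ∀ (g : G), ∀ b ∈ IsLocalRing.maximalIdeal B,
      g • b ∈ IsLocalRing.maximalIdeal B)
    (σ : G) (hσ : ∀ g : G, g ∈ Subgroup.zpowers σ)
    (IG : Ideal B) (hIG : IG = Ideal.span {x | ∃ (g : G) (b : B), x = g • b - b})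
    (hprin : IG.IsPrincipal) :
    ∃ y : B, IG = Ideal.span {σ • y - y} :=
  exists_augmentation_generator_of_principal_general σ hσ IG hIG hprin
end

section
/- Let σ be a ring automorphism of a commutative ring B of order dividing p, y ∈ B, and define for n ≥ 0 and i ≥ n the element y_i^{(n)} := Σ_{0 ≤ k₁ ≤ … ≤ k_{i−n} ≤ n} ∏_{j=1}^{i−n} σ^{k_j}(y) (the sum over weakly increasing (i−n)-tuples of exponents in {0,…,n}; for i = n the empty product gives y_n^{(n)} = 1). Then for all n and i ≥ n, σ(y_i^{(n)}) − y_i^{(n)} = (σ^{n+1}(y) − y) · y_i^{(n+1)}. -/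
/-!
Write `x k = σ^k y`, so that `y_i^{(n)} = h_{i-n}(x 0, …, x n)` is a complete homogeneous
symmetric polynomial and applying `σ` shifts every index by one. Splitting the weakly
increasing index tuples of `h_{m+1}(x 0, …, x (N+1))` according to whether they end at `N + 1`,
or according to whether they start at `0`, gives two recursions; their difference is
`h_{m+1}(x 1, …, x (N+1)) - h_{m+1}(x 0, …, x N) = (x (N+1) - x 0) · h_m(x 0, …, x (N+1))`.
-/

/-- `auxY σ y n i = ∑_{0 ≤ k₁ ≤ … ≤ k_{i−n} ≤ n} ∏_{j=1}^{i−n} σ^{k_j}(y)`,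
the sum over weakly increasing `(i−n)`-tuples of exponents in `{0,…,n}`
(and `0` when `i < n`). -/
noncomputable def auxY {B : Type*} [CommRing B] (σ : B ≃+* B) (y : B) (n i : ℕ) : B :=
  if n ≤ i then
    ∑ k ∈ Finset.univ.filter (fun k : Fin (i - n) → Fin (n + 1) => Monotone k),
      ∏ j, (σ ^ ((k j : ℕ))) y
  else 0

open Finset

namespace Fin

variable {α : Type*} [Preorder α] {m : ℕ} {g : Fin m → α} {a : α}

theorem monotone_snoc (hg : Monotone g) (ha : ∀ j, g j ≤ a) :
    Monotone (snoc g a : Fin (m + 1) → α) := by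
  intro i j hij
  induction j using lastCases with
  | last => induction i using lastCases <;> simp [ha]
  | cast j =>
    induction i using lastCases with
    | last => exact absurd hij (not_le.2 (castSucc_lt_last j))
    | cast i => simpa using hg (castSucc_le_castSucc_iff.1 hij)

theorem monotone_cons (hg : Monotone g) (ha : ∀ j, a ≤ g j) :
    Monotone (cons a g : Fin (m + 1) → α) := by
  intro i j hij
  induction i using cases with
  | zero => induction j using cases <;> simp [ha]
  | succ i =>
    induction j using cases with
    | zero => exact absurd hij (not_le.2 (succ_pos i))
    | succ j => simpa using hg (succ_le_succ_iff.1 hij)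

end Fin

section CompleteHomogeneous

variable {R : Type*} [CommSemiring R]

/-- `completeHomogeneous x N m` is the complete homogeneous symmetric polynomial
`h_m(x 0, …, x N)`, written as a sum over weakly increasing `m`-tuples of indices. -/
def completeHomogeneous (x : ℕ → R) (N m : ℕ) : R :=
  ∑ k ∈ univ.filter (fun k : Fin m → Fin (N + 1) => Monotone k), ∏ j, x (k j)

@[simp]
theorem completeHomogeneous_zero (x : ℕ → R) (N : ℕ) : completeHomogeneous x N 0 = 1 := by
  simp [completeHomogeneous, Subsingleton.monotone]

theorem completeHomogeneous_succ_succ_of_last (x : ℕ → R) (N m : ℕ) :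
    completeHomogeneous x (N + 1) (m + 1) =
      x (N + 1) * completeHomogeneous x (N + 1) m + completeHomogeneous x N (m + 1) := by
  rw [completeHomogeneous,
    ← sum_filter_add_sum_filter_not _ (fun k => k (Fin.last m) = Fin.last _)]
  congr 1
  · rw [completeHomogeneous, mul_sum]
    refine sum_bij' (fun k _ => Fin.init k) (fun g _ => Fin.snoc g (Fin.last _)) ?_ ?_ ?_ ?_ ?_
      <;> simp only [mem_filter, mem_univ, true_and]
    · exact fun k hk => hk.1.comp Fin.strictMono_castSucc.monotone
    · exact fun g hg => ⟨Fin.monotone_snoc hg fun _ => Fin.le_last _, Fin.snoc_last _ _⟩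
    · intro k hk
      rw [← hk.2, Fin.snoc_init_self]
    · exact fun g _ => Fin.init_snoc _ _
    · intro k hk
      rw [Fin.prod_univ_castSucc, hk.2, mul_comm]
      rfl
  · rw [completeHomogeneous]
    refine sum_bij' (fun k hk j => (k j).castLT ?_) (fun g _ j => (g j).castSucc) ?_ ?_ ?_ ?_ ?_
    · simp only [mem_filter, mem_univ, true_and] at hk
      exact (hk.1 (Fin.le_last j)).trans_lt (Fin.lt_last_iff_ne_last.2 hk.2)
    all_goals simp only [mem_filter, mem_univ, true_and]
    · exact fun k hk i j hij => hk.1 hij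
    · exact fun g hg => ⟨fun i j hij => hg hij, (Fin.castSucc_lt_last _).ne⟩
    · exact fun k _ => funext fun j => Fin.castSucc_castLT _ _
    · exact fun g _ => funext fun j => Fin.castLT_castSucc _ _
    · exact fun k _ => rfl

theorem completeHomogeneous_succ_succ_of_first (x : ℕ → R) (N m : ℕ) :
    completeHomogeneous x (N + 1) (m + 1) =
      x 0 * completeHomogeneous x (N + 1) m +
        completeHomogeneous (fun k => x (k + 1)) N (m + 1) := by
  rw [completeHomogeneous, ← sum_filter_add_sum_filter_not _ (fun k => k 0 = 0)]
  congr 1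
  · rw [completeHomogeneous, mul_sum]
    refine sum_bij' (fun k _ => Fin.tail k) (fun g _ => Fin.cons 0 g) ?_ ?_ ?_ ?_ ?_
      <;> simp only [mem_filter, mem_univ, true_and]
    · exact fun k hk => hk.1.comp Fin.strictMono_succ.monotone
    · exact fun g hg => ⟨Fin.monotone_cons hg fun _ => Fin.zero_le _, Fin.cons_zero _ _⟩
    · intro k hk
      rw [← hk.2, Fin.cons_self_tail]
    · exact fun g _ => Fin.tail_cons _ _
    · intro k hk
      rw [Fin.prod_univ_succ, hk.2]
      rfl
  · rw [completeHomogeneous]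
    refine sum_bij' (fun k hk j => (k j).pred ?_) (fun g _ j => (g j).succ) ?_ ?_ ?_ ?_ ?_
    · simp only [mem_filter, mem_univ, true_and] at hk
      exact Fin.pos_iff_ne_zero.1 ((Fin.pos_iff_ne_zero.2 hk.2).trans_le (hk.1 (Fin.zero_le j)))
    all_goals simp only [mem_filter, mem_univ, true_and]
    · exact fun k hk i j hij => Fin.pred_le_pred_iff.2 (hk.1 hij)
    · exact fun g hg => ⟨fun i j hij => Fin.succ_le_succ_iff.2 (hg hij), Fin.succ_ne_zero _⟩
    · exact fun k _ => funext fun j => Fin.succ_pred _ _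
    · exact fun g _ => funext fun j => Fin.pred_succ _
    · exact fun k _ => prod_congr rfl fun j _ =>
        congrArg x (by rw [← Fin.val_succ, Fin.succ_pred])

theorem map_completeHomogeneous {S F : Type*} [CommSemiring S] [FunLike F R S]
    [RingHomClass F R S] (f : F) (x : ℕ → R) (N m : ℕ) :
    f (completeHomogeneous x N m) = completeHomogeneous (f ∘ x) N m := by
  simp [completeHomogeneous, map_sum, map_prod]

end CompleteHomogeneous

theorem completeHomogeneous_shift_sub {R : Type*} [CommRing R] (x : ℕ → R) (N m : ℕ) :
    completeHomogeneous (fun k => x (k + 1)) N (m + 1) - completeHomogeneous x N (m + 1) =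
      (x (N + 1) - x 0) * completeHomogeneous x (N + 1) m := by
  linear_combination completeHomogeneous_succ_succ_of_last x N m -
    completeHomogeneous_succ_succ_of_first x N m

section AuxY

variable {B : Type*} [CommRing B] (σ : B ≃+* B) (y : B) {n i : ℕ}

theorem auxY_of_le (h : n ≤ i) :
    auxY σ y n i = completeHomogeneous (fun k => (σ ^ k) y) n (i - n) :=
  if_pos h

theorem auxY_of_lt (h : i < n) : auxY σ y n i = 0 :=
  if_neg h.not_ge

end AuxY

theorem augmentation_of_auxY_general {B : Type*} [CommRing B] (σ : B ≃+* B)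
    (y : B) (n i : ℕ) (hni : n ≤ i) :
    σ (auxY σ y n i) - auxY σ y n i = ((σ ^ (n + 1)) y - y) * auxY σ y (n + 1) i := by
  have orbit_shift : ⇑σ ∘ (fun k => (σ ^ k) y) = fun k => (σ ^ (k + 1)) y := by
    ext k
    simp only [Function.comp_apply, pow_succ', RingAut.mul_apply]
  rw [auxY_of_le σ y hni, map_completeHomogeneous, orbit_shift]
  obtain rfl | hlt := hni.eq_or_lt
  · simp [auxY_of_lt σ y (Nat.lt_succ_self n)]
  · obtain ⟨m, hm⟩ : ∃ m, i - n = m + 1 := ⟨i - n - 1, by omega⟩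
    rw [hm, completeHomogeneous_shift_sub (fun k => (σ ^ k) y), auxY_of_le σ y hlt, pow_zero,
      RingAut.one_apply]
    congr 2
    omega

/-- For all `n` and `i ≥ n`,
`σ(y_i^{(n)}) − y_i^{(n)} = (σ^{n+1}(y) − y) · y_i^{(n+1)}`. -/
theorem augmentation_of_auxY {B : Type*} [CommRing B] (σ : B ≃+* B) (p : ℕ)
    (hp : p.Prime) (hσ : σ ^ p = 1) (y : B) (n i : ℕ) (hni : n ≤ i) :
    σ (auxY σ y n i) - auxY σ y n i = ((σ ^ (n + 1)) y - y) * auxY σ y (n + 1) i :=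
  augmentation_of_auxY_general σ y n i hni
end

section
/- Let B be a local ring, G a cyclic group of prime order p acting on B by local automorphisms with generator σ, and suppose the augmentation ideal I_G = B·(σ(y) − y) is generated by σ(y) − y for some y ∈ B. Then for each n with 0 ≤ n ≤ p − 2, the element y_{n+1}^{(n)} = Σ_{j=1}^{n+1} σ^{j−1}(y) is again an augmentation generator, i.e., I_G = B·(σ(y_{n+1}^{(n)}) − y_{n+1}^{(n)}). -/
/-!
Write `t = σ y - y` and `s = σ^(n+1) y - y` (the element in the statement, by telescoping).
Since `n + 1` is prime to `p`, `σ` is a power `τ^k` of `τ = σ^(n+1)`, so telescoping once more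
`t = ∑_{j<k} τ^j s`. Now `s = c t` because `s ∈ I_G = (t)`. If `c` were not a unit, every
`g s = g(c) g(t)` would lie in `𝔪 t` (the action is local and `I_G` is `G`-stable), hence
`t ∈ 𝔪 t` and `t = 0` by Nakayama. So `(s) = (t) = I_G`.
-/

namespace MulSemiringAction

variable {G B : Type*} [Group G] [CommRing B] [MulSemiringAction G B]

variable (G B) in
def augmentationIdeal : Ideal B :=
  Ideal.span {x | ∃ (g : G) (b : B), x = g • b - b}

theorem smul_sub_mem_augmentationIdeal (g : G) (b : B) :
    g • b - b ∈ augmentationIdeal G B :=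
  Ideal.subset_span ⟨g, b, rfl⟩

theorem smul_mem_augmentationIdeal (g : G) {x : B} (hx : x ∈ augmentationIdeal G B) :
    g • x ∈ augmentationIdeal G B := by
  induction hx using Submodule.span_induction with
  | mem x hx =>
    obtain ⟨h, b, rfl⟩ := hx
    have : g • (h • b - b) = (g * h * g⁻¹) • (g • b) - g • b := by
      rw [smul_sub, smul_smul, smul_smul, inv_mul_cancel_right]
    exact this ▸ smul_sub_mem_augmentationIdeal _ _
  | zero => simp
  | add x y _ _ hx hy => simpa only [smul_add] using add_mem hx hy
  | smul a x _ hx =>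
    simpa only [smul_eq_mul, smul_mul'] using Ideal.mul_mem_left _ _ hx

end MulSemiringAction

theorem sum_range_pow_smul_smul_sub {G B : Type*} [Monoid G] [AddCommGroup B]
    [DistribMulAction G B] (g : G) (b : B) (m : ℕ) :
    ∑ j ∈ Finset.range m, g ^ j • (g • b - b) = g ^ m • b - b := by
  simp_rw [smul_sub, smul_smul, ← pow_succ]
  simpa using Finset.sum_range_sub (fun j => g ^ j • b) m

theorem span_singleton_eq_of_mem_of_mem_span_orbit {G B : Type*} [Group G] [CommRing B]
    [IsLocalRing B] [MulSemiringAction G B]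
    (hloc : ∀ (g : G), ∀ b ∈ IsLocalRing.maximalIdeal B, g • b ∈ IsLocalRing.maximalIdeal B)
    {s t : B} (ht : ∀ g : G, g • t ∈ Ideal.span {t}) (hs : s ∈ Ideal.span {t})
    (hts : t ∈ Ideal.span (Set.range fun g : G => g • s)) :
    Ideal.span {s} = Ideal.span {t} := by
  obtain ⟨c, rfl⟩ := Ideal.mem_span_singleton'.mp hs
  by_cases hc : IsUnit c
  · exact Ideal.span_singleton_mul_left_unit hc t
  have hcm : c ∈ IsLocalRing.maximalIdeal B := (IsLocalRing.mem_maximalIdeal c).mpr hc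
  have horbit : Ideal.span (Set.range fun g : G => g • (c * t)) ≤
      IsLocalRing.maximalIdeal B • Ideal.span {t} := by
    refine Ideal.span_le.mpr ?_
    rintro _ ⟨g, rfl⟩
    simp only [SetLike.mem_coe, smul_mul']
    exact Ideal.mul_mem_mul (hloc g c hcm) (ht g)
  have hbot : Ideal.span {t} = ⊥ :=
    Submodule.eq_bot_of_le_smul_of_le_jacobson_bot _ _ (Submodule.fg_span_singleton t)
      ((Ideal.span_singleton_le_iff_mem _).mpr hts |>.trans horbit)
      (IsLocalRing.maximalIdeal_le_jacobson ⊥)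
  rw [Ideal.span_singleton_eq_bot.mp hbot, mul_zero]

open MulSemiringAction in
theorem augmentation_generator_of_partial_trace_general
    {B : Type*} [CommRing B] [IsLocalRing B]
    {G : Type*} [Group G] [MulSemiringAction G B]
    (p : ℕ) (hp : p.Prime) (hcard : Nat.card G = p)
    (hloc : ∀ (g : G), ∀ b ∈ IsLocalRing.maximalIdeal B,
      g • b ∈ IsLocalRing.maximalIdeal B)
    (σ : G) (hσ : ∀ g : G, g ∈ Subgroup.zpowers σ)
    (IG : Ideal B) (hIG : IG = Ideal.span {x | ∃ (g : G) (b : B), x = g • b - b})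
    (y : B) (hy : IG = Ideal.span {σ • y - y})
    (n : ℕ) (hn : n ≤ p - 2) :
    IG = Ideal.span
      {σ • (∑ j ∈ Finset.range (n + 1), (σ ^ j) • y) -
        ∑ j ∈ Finset.range (n + 1), (σ ^ j) • y} := by
  have hI : augmentationIdeal G B = Ideal.span {σ • y - y} := by
    rw [← hy, hIG]; rfl
  have hsum : σ • (∑ j ∈ Finset.range (n + 1), σ ^ j • y) - ∑ j ∈ Finset.range (n + 1), σ ^ j • y
      = σ ^ (n + 1) • y - y := by
    rw [← sum_range_pow_smul_smul_sub, Finset.smul_sum, ← Finset.sum_sub_distrib]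
    simp only [smul_sub, smul_smul, ← pow_succ, ← pow_succ']
  have hσp : orderOf σ = p := hcard ▸ orderOf_eq_card_of_forall_mem_zpowers hσ
  obtain ⟨k, hk⟩ := exists_pow_eq_self_of_coprime (x := σ) (n := n + 1) <| hσp ▸
    (Nat.coprime_of_lt_prime n.succ_ne_zero (by have := hp.two_le; omega) hp).symm
  rw [hy, hsum]
  refine (span_singleton_eq_of_mem_of_mem_span_orbit hloc (fun g => ?_) ?_ ?_).symm
  · exact hI ▸ smul_mem_augmentationIdeal g (hI ▸ Ideal.mem_span_singleton_self _)
  · exact hI ▸ smul_sub_mem_augmentationIdeal _ _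
  · have ht : σ • y - y = ∑ j ∈ Finset.range k, (σ ^ (n + 1)) ^ j • (σ ^ (n + 1) • y - y) := by
      rw [sum_range_pow_smul_smul_sub, hk]
    rw [ht]
    exact Ideal.sum_mem _ fun j _ => Ideal.subset_span (Set.mem_range_self _)

/-- If `y` is an augmentation generator for a `p`-cyclic action by local
automorphisms on a local ring `B`, then for `0 ≤ n ≤ p − 2` the element
`y_{n+1}^{(n)} = ∑_{j=1}^{n+1} σ^{j−1}(y)` is again an augmentation generator. -/
theorem augmentation_generator_of_partial_trace
    {B : Type*} [CommRing B] [IsLocalRing B]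
    {G : Type*} [Group G] [Fintype G] [MulSemiringAction G B]
    (p : ℕ) (hp : p.Prime) (hcard : Nat.card G = p)
    (hloc : ∀ (g : G), ∀ b ∈ IsLocalRing.maximalIdeal B,
      g • b ∈ IsLocalRing.maximalIdeal B)
    (σ : G) (hσ : ∀ g : G, g ∈ Subgroup.zpowers σ)
    (IG : Ideal B) (hIG : IG = Ideal.span {x | ∃ (g : G) (b : B), x = g • b - b})
    (y : B) (hy : IG = Ideal.span {σ • y - y})
    (n : ℕ) (hn : n ≤ p - 2) :
    IG = Ideal.span
      {σ • (∑ j ∈ Finset.range (n + 1), (σ ^ j) • y) -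
        ∑ j ∈ Finset.range (n + 1), (σ ^ j) • y} :=
  augmentation_generator_of_partial_trace_general p hp hcard hloc σ hσ IG hIG y hy n hn
end

section
/- Let B be a normal local domain, G a cyclic group of prime order p acting faithfully on B by local automorphisms with invariant ring A = B^G, and suppose the augmentation ideal I_G is generated by σ(y) − y for y ∈ B (with σ(y) ≠ y). Then B decomposes as a direct sum of A-modules: B = A·y⁰ ⊕ A·y¹ ⊕ … ⊕ A·y^{p−1}; in particular B is a free A-module with basis 1, y, …, y^{p−1}. -/
/-!
Put `t = σ y - y`. As `t` generates the augmentation ideal, it divides every `σ z - z`. Since `p`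
is prime, `σ` is a power of each `σ ^ s` with `0 < s < p`; telescoping and locality of `B` then show
that every difference `σ ^ j y - σ ^ i y` (`i < j < p`) divides `t`, so the Vandermonde determinant
of `(σ ^ j y)_j` divides `t ^ (p (p - 1) / 2)`. Conversely, taking successive differences of rows
shows that `t ^ (p (p - 1) / 2)` divides `det (σ ^ j (x k))` for every `x : Fin p → B`, in
particular every Cramer numerator of the system `∑ k, (σ ^ j y) ^ k * a k = σ ^ j b`. Hence the
system has a unique solution `a` in `B`. Applying `σ` permutes the equations cyclically, so `σ ∘ a`
is a solution as well, `a` is invariant, and the equation for `j = 0` is `b = ∑ k, a k * y ^ k`.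
-/

open Finset Matrix

section

variable {B : Type*}

theorem dvd_pow_apply_sub_self [Ring B] {σ : B ≃+* B} {t : B} (h : ∀ z, t ∣ σ z - z)
    (i : ℕ) (z : B) : t ∣ (σ ^ i) z - z := by
  induction i generalizing z with
  | zero => simp
  | succ i ih =>
    have hsplit : (σ ^ (i + 1)) z - z = ((σ ^ i) (σ z) - σ z) + (σ z - z) := by
      rw [pow_succ, RingAut.mul_apply]; abel
    rw [hsplit]
    exact dvd_add (ih _) (h z)

theorem dvd_pow_apply_of_dvd [Ring B] {σ : B ≃+* B} {t : B} (h : ∀ z, t ∣ σ z - z)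
    (i : ℕ) {z : B} (hz : t ∣ z) : t ∣ (σ ^ i) z := by
  simpa using dvd_add (dvd_pow_apply_sub_self h i z) hz

theorem isUnit_of_pow_apply_sub_self_eq [CommRing B] [IsDomain B] [IsLocalRing B]
    {τ : B ≃+* B} {t w x : B} (ht : t ≠ 0) (hτ : ∀ z, t ∣ τ z - z) {m : ℕ}
    (hm : (τ ^ m) x - x = t) (hw : τ x - x = w * t) : IsUnit w := by
  choose c hc using fun j : ℕ => dvd_pow_apply_of_dvd hτ j (dvd_refl t)
  -- if `w` were not a unit, this would put `t` in `𝔪 t`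
  have hsum : t * 1 = t * ∑ j ∈ range m, (τ ^ j) w * c j := by
    calc t * 1 = (τ ^ m) x - (τ ^ 0) x := by rw [mul_one, pow_zero, RingAut.one_apply, hm]
      _ = ∑ j ∈ range m, (τ ^ j) (τ x - x) := by
        rw [← sum_range_sub fun j => (τ ^ j) x]
        refine sum_congr rfl fun j _ => ?_
        rw [map_sub, pow_succ, RingAut.mul_apply]
      _ = t * ∑ j ∈ range m, (τ ^ j) w * c j := by
        rw [mul_sum]
        refine sum_congr rfl fun j _ => ?_
        rw [hw, map_mul, hc]
        ring
  by_contra hw'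
  refine (IsLocalRing.maximalIdeal.isMaximal B).ne_top ((Ideal.eq_top_iff_one _).2 ?_)
  rw [mul_left_cancel₀ ht hsum]
  refine Ideal.sum_mem _ fun j _ => Ideal.mul_mem_right _ _ ?_
  rw [IsLocalRing.mem_maximalIdeal, mem_nonunits_iff, isUnit_map_iff]
  exact hw'

theorem pow_apply_sub_pow_apply_dvd [CommRing B] [IsDomain B] [IsLocalRing B]
    {σ : B ≃+* B} {p : ℕ} (hp : p.Prime) (hσ : orderOf σ = p) {y : B} (hy : σ y ≠ y)
    (h : ∀ z, σ y - y ∣ σ z - z) {i j : ℕ} (hij : i < j) (hjp : j < p) :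
    (σ ^ j) y - (σ ^ i) y ∣ σ y - y := by
  obtain ⟨m, hm⟩ : ∃ m, (σ ^ (j - i)) ^ m = σ := by
    refine exists_pow_eq_self_of_coprime ?_
    rw [hσ]
    exact (hp.coprime_iff_not_dvd.2 (Nat.not_dvd_of_pos_of_lt (by omega) (by omega))).symm
  obtain ⟨w, hw⟩ := dvd_pow_apply_sub_self h (j - i) y
  have hwu : IsUnit w := isUnit_of_pow_apply_sub_self_eq (sub_ne_zero.2 hy)
    (dvd_pow_apply_sub_self h (j - i)) (m := m) (by rw [hm]) (by rw [hw, mul_comm])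
  have hσi : (σ ^ i) (σ y - y) ∣ σ y - y := by
    have := map_dvd (σ ^ i) (dvd_pow_apply_of_dvd h (p - i) (dvd_refl (σ y - y)))
    rwa [← RingAut.mul_apply, ← pow_add, Nat.add_sub_cancel' (by omega), ← hσ,
      pow_orderOf_eq_one, RingAut.one_apply] at this
  calc (σ ^ j) y - (σ ^ i) y = (σ ^ i) w * (σ ^ i) (σ y - y) := by
        rw [← map_mul, mul_comm, ← hw, map_sub, ← RingAut.mul_apply, ← pow_add,
          Nat.add_sub_cancel' hij.le]
    _ ∣ σ y - y := ((hwu.map _).mul_left_dvd).2 hσi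

theorem det_vandermonde_pow_apply_dvd [CommRing B] [IsDomain B] [IsLocalRing B]
    {σ : B ≃+* B} {p : ℕ} (hp : p.Prime) (hσ : orderOf σ = p) {y : B} (hy : σ y ≠ y)
    (h : ∀ z, σ y - y ∣ σ z - z) :
    det (vandermonde fun j : Fin p => (σ ^ (j : ℕ)) y) ∣ (σ y - y) ^ ∑ i ∈ range p, i := by
  have hexp : ∑ i ∈ range p, i = ∑ i : Fin p, #(Ioi i) := by
    simp only [Fin.card_Ioi, Fin.sum_univ_eq_sum_range (fun i => p - 1 - i),
      sum_range_reflect (fun i => i)]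
  rw [det_vandermonde, hexp, ← prod_pow_eq_pow_sum]
  refine prod_dvd_prod_of_dvd _ _ fun i _ => ?_
  rw [← prod_const]
  exact prod_dvd_prod_of_dvd _ _ fun j hj =>
    pow_apply_sub_pow_apply_dvd hp hσ hy h (Fin.lt_def.1 (mem_Ioi.1 hj)) j.isLt

/-- Subtracting each orbit row from the next one uses `σ^(i+1) z - σ^i z = σ^i t * σ^i (Δ z)`:
the rows below row `r` become the orbit of `Δ z`, scaled by the factors `σ^i t`. -/
theorem det_eq_prod_mul_det_of_rows_eq [CommRing B] {σ : B ≃+* B} {t : B} {Δ : B → B}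
    (hΔ : ∀ z, σ z - z = t * Δ z) {n r : ℕ} {M : Matrix (Fin (n + 1)) (Fin (n + 1)) B}
    {z : Fin (n + 1) → B}
    (hM : ∀ (j : Fin (n + 1)) k, r ≤ (j : ℕ) → M j k = (σ ^ ((j : ℕ) - r)) (z k)) :
    M.det = (∏ j : Fin (n + 1), if r < (j : ℕ) then (σ ^ ((j : ℕ) - (r + 1))) t else 1) *
      (of fun (j : Fin (n + 1)) k =>
        if (j : ℕ) ≤ r then M j k else (σ ^ ((j : ℕ) - (r + 1))) (Δ (z k))).det := by
  rw [← det_mul_column]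
  refine det_eq_of_forall_row_eq_smul_add_pred (fun i => if r ≤ (i : ℕ) then 1 else 0) ?_ ?_
  · intro k
    simp
  · intro i k
    rcases le_or_gt r i with hri | hri
    · rw [hM _ _ (by simp; omega), hM _ _ (by simpa)]
      simp only [of_apply, Fin.val_succ, Fin.val_castSucc, if_pos hri,
        if_pos (show r < (i : ℕ) + 1 by omega), if_neg (show ¬ (i : ℕ) + 1 ≤ r by omega),
        one_mul]
      rw [show (i : ℕ) + 1 - (r + 1) = (i : ℕ) - r by omega,
        show (i : ℕ) + 1 - r = (i : ℕ) - r + 1 by omega, pow_succ, RingAut.mul_apply,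
        ← map_mul, ← map_add, ← hΔ, sub_add_cancel]
    · simp [show ¬ r ≤ (i : ℕ) by omega, show (i : ℕ) + 1 ≤ r by omega]

theorem card_filter_lt_val {n r s : ℕ} (hrs : r + (s + 1) = n + 1) :
    #{j : Fin (n + 1) | r < (j : ℕ)} = s := by
  have h := card_filter_add_card_filter_not (s := univ) fun j : Fin (n + 1) => (j : ℕ) < r + 1
  simp only [Fin.card_filter_val_lt, card_univ, Fintype.card_fin, not_lt, Nat.succ_le_iff] at h
  omega

theorem pow_sum_range_dvd_det_of_rows_eq [CommRing B] {σ : B ≃+* B} {t : B}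
    (h : ∀ z, t ∣ σ z - z) {n : ℕ} (s r : ℕ) (M : Matrix (Fin (n + 1)) (Fin (n + 1)) B)
    (z : Fin (n + 1) → B) (hrs : r + s = n + 1)
    (hM : ∀ (j : Fin (n + 1)) k, r ≤ (j : ℕ) → M j k = (σ ^ ((j : ℕ) - r)) (z k)) :
    t ^ (∑ i ∈ range s, i) ∣ M.det := by
  induction s generalizing r M z with
  | zero => simp
  | succ s ih =>
    obtain ⟨Δ, hΔ⟩ := Classical.axiomOfChoice h
    have hscale :
        t ^ s ∣ ∏ j : Fin (n + 1), if r < (j : ℕ) then (σ ^ ((j : ℕ) - (r + 1))) t else 1 :=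
      calc t ^ s = ∏ j : Fin (n + 1), if r < (j : ℕ) then t else 1 := by
            rw [prod_ite, prod_const, prod_const_one, mul_one, card_filter_lt_val hrs]
        _ ∣ _ := prod_dvd_prod_of_dvd _ _ fun j _ => by
            split_ifs
            exacts [dvd_pow_apply_of_dvd h _ dvd_rfl, dvd_rfl]
    rw [det_eq_prod_mul_det_of_rows_eq hΔ hM, sum_range_succ, pow_add, mul_comm (t ^ _)]
    refine mul_dvd_mul hscale (ih (r + 1) _ (Δ ∘ z) (by omega) fun j k hj => ?_)
    simp [show ¬ (j : ℕ) ≤ r by omega]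

theorem pow_val_fin_add_one {M : Type*} [Monoid M] {g : M} {n : ℕ} (hg : g ^ (n + 1) = 1)
    (j : Fin (n + 1)) : g ^ ((j + 1 : Fin (n + 1)) : ℕ) = g * g ^ (j : ℕ) := by
  rw [Fin.val_add_one]
  split_ifs with hj
  · rw [hj, Fin.val_last, pow_zero, ← pow_succ', hg]
  · rw [pow_succ']

section Vandermonde

variable [CommRing B] {σ : B ≃+* B} {n : ℕ} {y : B}

local notation "V" => vandermonde fun j : Fin (n + 1) => (σ ^ (j : ℕ)) y

theorem det_vandermonde_pow_apply_ne_zero [IsDomain B] [IsLocalRing B] (hp : (n + 1).Prime)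
    (hσ : orderOf σ = n + 1) (hy : σ y ≠ y) (h : ∀ z, σ y - y ∣ σ z - z) : det V ≠ 0 :=
  fun h0 => pow_ne_zero _ (sub_ne_zero.2 hy)
    (zero_dvd_iff.1 (h0 ▸ det_vandermonde_pow_apply_dvd hp hσ hy h))

theorem exists_vandermonde_mulVec_eq [IsDomain B] [IsLocalRing B] (hp : (n + 1).Prime)
    (hσ : orderOf σ = n + 1) (hy : σ y ≠ y) (h : ∀ z, σ y - y ∣ σ z - z) (b : B) :
    ∃ a, V *ᵥ a = fun j : Fin (n + 1) => (σ ^ (j : ℕ)) b := by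
  have hVt := det_vandermonde_pow_apply_dvd hp hσ hy h
  have hcramer : ∀ k, det V ∣ cramer V (fun j => (σ ^ (j : ℕ)) b) k := by
    intro k
    refine hVt.trans (pow_sum_range_dvd_det_of_rows_eq h (n + 1) 0 _
      (Function.update (fun i : Fin (n + 1) => y ^ (i : ℕ)) k b) (zero_add _) fun j k' _ => ?_)
    rw [updateCol_apply, Function.update_apply]
    split_ifs <;> simp [vandermonde_apply, map_pow]
  choose a ha using hcramer
  refine ⟨a, smul_right_injective _ (det_vandermonde_pow_apply_ne_zero hp hσ hy h) ?_⟩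
  dsimp only
  rw [← mulVec_smul, ← mulVec_cramer _ fun j : Fin (n + 1) => (σ ^ (j : ℕ)) b]
  exact congrArg _ (funext fun k => (ha k).symm)

theorem vandermonde_mulVec_eq_of_forall_apply_eq {a : Fin (n + 1) → B}
    (ha : ∀ k, σ (a k) = a k) :
    V *ᵥ a = fun j : Fin (n + 1) => (σ ^ (j : ℕ)) (∑ k, a k * y ^ (k : ℕ)) := by
  have hpow : ∀ (i : ℕ) k, (σ ^ i) (a k) = a k := by
    intro i k
    induction i with
    | zero => rfl
    | succ i ih => rw [pow_succ', RingAut.mul_apply, ih, ha]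
  funext j
  simp only [mulVec, dotProduct, vandermonde_apply, map_sum, map_mul, map_pow, hpow, mul_comm]

theorem vandermonde_mulVec_comp_apply_add_one (hσ : σ ^ (n + 1) = 1) (a : Fin (n + 1) → B)
    (j : Fin (n + 1)) : (V *ᵥ (σ ∘ a)) (j + 1) = σ ((V *ᵥ a) j) := by
  simp only [mulVec, dotProduct, vandermonde_apply, map_sum, map_mul, map_pow,
    pow_val_fin_add_one hσ, RingAut.mul_apply, Function.comp_apply]

theorem forall_apply_eq_of_vandermonde_mulVec_eq [IsDomain B] (hσ : σ ^ (n + 1) = 1)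
    (hV : det V ≠ 0) {a : Fin (n + 1) → B} {b : B}
    (ha : V *ᵥ a = fun j : Fin (n + 1) => (σ ^ (j : ℕ)) b) (k : Fin (n + 1)) :
    σ (a k) = a k := by
  suffices V *ᵥ (σ ∘ a) = V *ᵥ a from congrFun (mulVec_injective_of_det_ne_zero hV this) k
  funext j
  obtain ⟨i, rfl⟩ : ∃ i, j = i + 1 := ⟨j - 1, (sub_add_cancel j 1).symm⟩
  rw [vandermonde_mulVec_comp_apply_add_one hσ, ha]
  exact (congrFun (congrArg DFunLike.coe (pow_val_fin_add_one hσ i)) b).symm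

end Vandermonde

end

theorem free_decomposition_of_augmentation_generator_general
    {B : Type*} [CommRing B] [IsDomain B] [IsLocalRing B]
    (p : ℕ) (hp : p.Prime) (σ : B ≃+* B) (horder : orderOf σ = p)
    (A : Subring B) (hA : A = RingHom.eqLocus (σ : B →+* B) (RingHom.id B))
    (y : B) (hy : σ y ≠ y)
    (hgen : Ideal.span {x | ∃ b : B, x = σ b - b} = Ideal.span {σ y - y}) :
    ∀ b : B, ∃! a : Fin p → A, b = ∑ i : Fin p, (a i : B) * y ^ (i : ℕ) := by
  obtain ⟨n, rfl⟩ : ∃ n, p = n + 1 := ⟨p - 1, (Nat.succ_pred_eq_of_pos hp.pos).symm⟩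
  have hσ : σ ^ (n + 1) = 1 := horder ▸ pow_orderOf_eq_one σ
  have hdvd : ∀ z, σ y - y ∣ σ z - z := fun z =>
    Ideal.mem_span_singleton.1 (hgen ▸ Ideal.subset_span ⟨z, rfl⟩)
  have hmem : ∀ z, z ∈ A ↔ σ z = z := fun z => by rw [hA]; rfl
  have hV := det_vandermonde_pow_apply_ne_zero hp horder hy hdvd
  intro b
  obtain ⟨a, ha⟩ := exists_vandermonde_mulVec_eq hp horder hy hdvd b
  have hfix := forall_apply_eq_of_vandermonde_mulVec_eq hσ hV ha
  refine ⟨fun k => ⟨a k, (hmem _).2 (hfix k)⟩, ?_, fun a' ha' => ?_⟩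
  · simpa using congrFun (ha.symm.trans (vandermonde_mulVec_eq_of_forall_apply_eq hfix)) 0
  · have hsys := vandermonde_mulVec_eq_of_forall_apply_eq (y := y) (a := fun k => (a' k : B))
      fun k => (hmem _).1 (a' k).2
    rw [← ha', ← ha] at hsys
    funext k
    exact Subtype.ext (congrFun (mulVec_injective_of_det_ne_zero hV hsys) k)

/-- If the augmentation ideal of a faithful `p`-cyclic action on a normal local
domain `B` is generated by `σ y − y` (with `σ y ≠ y`), then
`B = A·y⁰ ⊕ A·y¹ ⊕ … ⊕ A·y^{p−1}` over the invariant ring `A = B^G`: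
every `b ∈ B` is uniquely `∑ aᵢ yⁱ` with `aᵢ ∈ A`. -/
theorem free_decomposition_of_augmentation_generator
    {B : Type*} [CommRing B] [IsDomain B] [IsIntegrallyClosed B] [IsLocalRing B]
    (p : ℕ) (hp : p.Prime) (σ : B ≃+* B) (horder : orderOf σ = p)
    (hloc : ∀ b ∈ IsLocalRing.maximalIdeal B, σ b ∈ IsLocalRing.maximalIdeal B)
    (A : Subring B) (hA : A = RingHom.eqLocus (σ : B →+* B) (RingHom.id B))
    (y : B) (hy : σ y ≠ y)
    (hgen : Ideal.span {x | ∃ b : B, x = σ b - b} = Ideal.span {σ y - y}) :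
    ∀ b : B, ∃! a : Fin p → A, b = ∑ i : Fin p, (a i : B) * y ^ (i : ℕ) :=
  free_decomposition_of_augmentation_generator_general p hp σ horder A hA y hy hgen
end

section
/- Let B be a normal local domain with a faithful action of a cyclic group G of prime order p by local automorphisms, A = B^G. If the augmentation ideal I_G is principal with augmentation generator y, and a ∈ A divides b = a₀ + a₁y + … + a_{p−1}y^{p−1} in B with all a_i ∈ A, then a divides each a_i in A. -/
/-!
Put `t = σ y - y` and `z = b / a ∈ B`. For `0 < m < p` the power `σ ^ m` generates `G`, and
locality forces `σ ^ m y - y` to be `t` times a unit; so every difference `σ x - x`, which lies in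
`I_G = (t)`, is divisible by each `σ ^ m y - y`. This is exactly what keeps the Neville–Aitken
recursion inside `B`: it produces `g ∈ B[X]` of degree `< p` with `g (σ ^ k y) = σ ^ k z` for all
`k < p`. The polynomials `∑ aᵢ Xⁱ` and `a • g` then agree at the `p` distinct points `σ ^ k y`,
hence coincide, so `aᵢ = a gᵢ`, and `gᵢ` is `σ`-fixed because `a` and `aᵢ` are.
-/

open Polynomial

theorem MulAction.injective_pow_smul_of_orderOf_prime {M α : Type*} [Monoid M] [MulAction M α]
    {g : M} {p : ℕ} (hp : p.Prime) (hg : orderOf g = p) {a : α} (ha : g • a ≠ a) :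
    Function.Injective fun k : Fin p => g ^ (k : ℕ) • a := by
  have hperiod : period g a = p :=
    (hp.eq_one_or_self_of_dvd _ (hg ▸ period_dvd_orderOf g a)).resolve_left
      (mt period_eq_one_iff.mp ha)
  intro k l hkl
  refine Fin.ext (Function.iterate_injOn_Iio_minimalPeriod (f := (g • ·)) (x := a) ?_ ?_ ?_)
  · simp [← period_eq_minimalPeriod, hperiod]
  · simp [← period_eq_minimalPeriod, hperiod]
  · simpa only [smul_iterate_apply] using hkl

theorem RingHom.dvd_of_coe_dvd_eqLocus_id {R : Type*} [CommRing R] [IsDomain R] {σ : R →+* R}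
    {a c : eqLocus σ (RingHom.id R)} (h : (a : R) ∣ c) : a ∣ c := by
  obtain ⟨e, he⟩ := h
  by_cases ha : (a : R) = 0
  · exact ⟨0, Subtype.ext (by simp [he, ha])⟩
  have hfix : σ e = e := by
    apply mul_left_cancel₀ ha
    have hc : σ c = c := c.2
    have ha' : σ a = a := a.2
    rw [← he, ← ha', ← map_mul, ← he, hc]
  exact ⟨⟨e, hfix⟩, Subtype.ext he⟩

/-- Neville–Aitken step: interpolants `g` of `w` on the nodes `x 0, …, x n` and `g'` on
`x 1, …, x (n + 1)` combine to one on `x 0, …, x (n + 1)`. -/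
theorem Polynomial.eval_add_X_sub_C_mul_eq {R : Type*} [CommRing R] [IsDomain R] {x w : ℕ → R}
    {n : ℕ} {g g' h : R[X]} (hg : ∀ k ≤ n, g.eval (x k) = w k)
    (hg' : ∀ k ≤ n, g'.eval (x (k + 1)) = w (k + 1)) (hx : x (n + 1) ≠ x 0)
    (hh : g' - g = C (x (n + 1) - x 0) * h) :
    ∀ k ≤ n + 1, (g + (X - C (x 0)) * h).eval (x k) = w k := by
  rintro (_ | k) hk
  · simp [hg 0 n.zero_le]
  have hhk := congrArg (eval (x (k + 1))) hh
  simp only [eval_sub, eval_mul, eval_C] at hhk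
  have key : (x (n + 1) - x 0) * ((g + (X - C (x 0)) * h).eval (x (k + 1)) - w (k + 1))
      = (x (n + 1) - x (k + 1)) * (g.eval (x (k + 1)) - w (k + 1)) := by
    simp only [eval_add, eval_mul, eval_sub, eval_X, eval_C]
    linear_combination (x (k + 1) - x 0) * (hg' k (by omega)) - (x (k + 1) - x 0) * hhk
  have hzero : (x (n + 1) - x (k + 1)) * (g.eval (x (k + 1)) - w (k + 1)) = 0 := by
    rcases Nat.lt_or_ge k n with hkn | hkn
    · rw [hg (k + 1) hkn, sub_self, mul_zero]
    · rw [show k = n by omega, sub_self, zero_mul]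
  rw [hzero, mul_eq_zero, sub_eq_zero, sub_eq_zero] at key
  exact key.resolve_left hx

namespace RingEquiv

variable {R : Type*} [CommRing R]

theorem pow_apply_eq_self {σ : R ≃+* R} {x : R} (hx : σ x = x) (k : ℕ) : (σ ^ k) x = x :=
  (smul_iterate_apply (σ : RingAut R) k x).symm.trans (Function.iterate_fixed hx k)

theorem eval_pow_apply {σ : R ≃+* R} {f : R[X]} (hf : ∀ n, σ (f.coeff n) = f.coeff n) (k : ℕ)
    (x : R) : f.eval ((σ ^ k) x) = (σ ^ k) (f.eval x) := by
  have hmap : f.map ((σ ^ k : R ≃+* R) : R →+* R) = f :=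
    Polynomial.ext fun n => by rw [coeff_map]; exact pow_apply_eq_self (hf n) k
  conv_lhs => rw [← hmap]
  exact eval_map_apply ((σ ^ k : R ≃+* R) : R →+* R) x

def augmentationIdeal (σ : R ≃+* R) : Ideal R :=
  Ideal.span {x | ∃ b, x = σ b - b}

theorem apply_sub_mem_augmentationIdeal (σ : R ≃+* R) (b : R) :
    σ b - b ∈ σ.augmentationIdeal :=
  Ideal.subset_span ⟨b, rfl⟩

theorem pow_apply_sub_mem_augmentationIdeal (σ : R ≃+* R) (b : R) (k : ℕ) :
    (σ ^ k) b - b ∈ σ.augmentationIdeal := by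
  induction k with
  | zero => simp
  | succ k ih =>
    have hsplit : (σ ^ (k + 1)) b - b = (σ ((σ ^ k) b) - (σ ^ k) b) + ((σ ^ k) b - b) := by
      rw [pow_succ', RingAut.mul_apply]; ring
    rw [hsplit]
    exact add_mem (apply_sub_mem_augmentationIdeal σ _) ih

theorem pow_apply_apply_sub_mem_augmentationIdeal (σ : R ≃+* R) (b : R) (k : ℕ) :
    (σ ^ k) (σ b - b) ∈ σ.augmentationIdeal := by
  rw [map_sub, ← RingAut.mul_apply, ← pow_succ, pow_succ', RingAut.mul_apply]
  exact apply_sub_mem_augmentationIdeal σ _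

theorem span_pow_apply_sub_eq_augmentationIdeal [IsDomain R] [IsLocalRing R] {σ : R ≃+* R}
    {y : R} (hgen : σ.augmentationIdeal = Ideal.span {σ y - y}) (hy : σ y ≠ y) {m : ℕ}
    (hm : m.Coprime (orderOf σ)) :
    Ideal.span {(σ ^ m) y - y} = σ.augmentationIdeal := by
  set t := σ y - y
  obtain ⟨r, hr⟩ := exists_pow_eq_self_of_coprime hm
  obtain ⟨v, hv⟩ := Ideal.mem_span_singleton'.mp (hgen ▸ pow_apply_sub_mem_augmentationIdeal σ y m)
  suffices hv_unit : IsUnit v by rw [← hv, Ideal.span_singleton_mul_left_unit hv_unit, hgen]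
  -- Otherwise every `(σ ^ m) ^ j y - y` lies in `t 𝔪`; for `j = r` this gives `t ∈ t 𝔪`.
  by_contra hv_nonunit
  set J := Ideal.span {t} * IsLocalRing.maximalIdeal R
  have hJ : ∀ j : ℕ, ((σ ^ m) ^ j) y - y ∈ J := by
    intro j
    induction j with
    | zero => simp
    | succ j ih =>
      have hσt : ((σ ^ m) ^ j) t ∈ Ideal.span {t} := by
        rw [← hgen, ← pow_mul]
        exact pow_apply_apply_sub_mem_augmentationIdeal σ y (m * j)
      have hsplit : ((σ ^ m) ^ (j + 1)) y - y
          = ((σ ^ m) ^ j) t * ((σ ^ m) ^ j) v + (((σ ^ m) ^ j) y - y) := by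
        rw [← map_mul, mul_comm, hv, map_sub, pow_succ, RingAut.mul_apply]; ring
      rw [hsplit]
      exact J.add_mem (Ideal.mul_mem_mul hσt ((isUnit_map_iff _ _).not.mpr hv_nonunit)) ih
  obtain ⟨w, hw, htw⟩ := Ideal.mem_span_singleton_mul.mp (hr ▸ hJ r)
  have hw_one : w = 1 := by
    apply mul_left_cancel₀ (sub_ne_zero.mpr hy)
    rw [htw, mul_one]
  exact (IsLocalRing.maximalIdeal.isMaximal R).ne_top ((Ideal.eq_top_iff_one _).mpr (hw_one ▸ hw))

theorem exists_natDegree_le_eval_pow_apply_eq [IsDomain R] (σ : R ≃+* R) (y z : R) (n : ℕ)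
    (hI : σ.augmentationIdeal ≠ ⊥)
    (hspan : ∀ m, 0 < m → m ≤ n → Ideal.span {(σ ^ m) y - y} = σ.augmentationIdeal) :
    ∃ g : R[X], g.natDegree ≤ n ∧ ∀ k ≤ n, g.eval ((σ ^ k) y) = (σ ^ k) z := by
  induction n with
  | zero => exact ⟨C z, by simp, fun k hk => by simp [Nat.le_zero.mp hk]⟩
  | succ n ih =>
    obtain ⟨g, hdeg, hg⟩ := ih fun m h0 hm => hspan m h0 (by omega)
    have hspan' := hspan (n + 1) n.succ_pos le_rfl
    have hd : (σ ^ (n + 1)) y - y ≠ 0 := fun h =>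
      hI (by rw [← hspan', h, Ideal.span_singleton_eq_bot])
    obtain ⟨h, hh⟩ : C ((σ ^ (n + 1)) y - y) ∣ g.map (σ : R →+* R) - g := by
      refine (C_dvd_iff_dvd_coeff _ _).mpr fun i => ?_
      rw [coeff_sub, coeff_map, ← Ideal.mem_span_singleton, hspan']
      exact apply_sub_mem_augmentationIdeal σ _
    have hhdeg : h.natDegree ≤ n := by
      rw [← natDegree_C_mul hd, ← hh]
      exact (natDegree_sub_le _ _).trans (max_le (natDegree_map_le.trans hdeg) hdeg)
    refine ⟨g + (X - C y) * h, ?_, ?_⟩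
    · refine (natDegree_add_le _ _).trans (max_le (hdeg.trans n.le_succ) ?_)
      refine natDegree_mul_le.trans ?_
      rw [natDegree_X_sub_C]
      omega
    · have hg' : ∀ k ≤ n, (g.map (σ : R →+* R)).eval ((σ ^ (k + 1)) y) = (σ ^ (k + 1)) z := by
        intro k hk
        rw [pow_succ', RingAut.mul_apply, RingAut.mul_apply, ← hg k hk]
        exact eval_map_apply (σ : R →+* R) _
      simpa using eval_add_X_sub_C_mul_eq (x := fun k => (σ ^ k) y) (w := fun k => (σ ^ k) z)
        hg hg' (by simpa using sub_ne_zero.mp hd) (by simpa using hh)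

theorem dvd_coeff_of_dvd_eval [IsDomain R] [IsLocalRing R] {p : ℕ} (hp : p.Prime)
    {σ : R ≃+* R} (horder : orderOf σ = p) {y : R} (hy : σ y ≠ y)
    (hgen : σ.augmentationIdeal = Ideal.span {σ y - y}) {f : R[X]}
    (hf : ∀ n, σ (f.coeff n) = f.coeff n) (hdeg : f.natDegree < p) {a : R} (ha : σ a = a)
    (hdvd : a ∣ f.eval y) (n : ℕ) : a ∣ f.coeff n := by
  obtain ⟨z, hz⟩ := hdvd
  have hI : σ.augmentationIdeal ≠ ⊥ := by
    rw [hgen, Ne, Ideal.span_singleton_eq_bot, sub_eq_zero]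
    exact hy
  have hspan : ∀ m, 0 < m → m ≤ p - 1 → Ideal.span {(σ ^ m) y - y} = σ.augmentationIdeal :=
    fun m h0 hm => span_pow_apply_sub_eq_augmentationIdeal hgen hy <| horder ▸
      Nat.coprime_comm.mp (hp.coprime_iff_not_dvd.mpr (Nat.not_dvd_of_pos_of_lt h0 (by omega)))
  obtain ⟨g, hgdeg, hg⟩ := exists_natDegree_le_eval_pow_apply_eq σ y z (p - 1) hI hspan
  have hnodes : Function.Injective fun k : Fin p => (σ ^ (k : ℕ)) y :=
    MulAction.injective_pow_smul_of_orderOf_prime (g := (σ : RingAut R)) hp horder hy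
  have hfg : f = C a * g := by
    refine eq_of_natDegree_lt_card_of_eval_eq _ _ hnodes (fun k => ?_) ?_
    · rw [eval_pow_apply hf, hz, map_mul, pow_apply_eq_self ha, eval_mul, eval_C, hg k (by omega)]
    · rw [Fintype.card_fin]
      exact max_lt hdeg ((natDegree_C_mul_le a g).trans_lt
        (hgdeg.trans_lt (Nat.sub_lt hp.pos one_pos)))
  exact ⟨g.coeff n, by rw [hfg, coeff_C_mul]⟩

end RingEquiv

theorem dvd_coefficients_of_dvd_combination_general
    {B : Type*} [CommRing B] [IsDomain B] [IsLocalRing B]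
    (p : ℕ) (hp : p.Prime) (σ : B ≃+* B) (horder : orderOf σ = p)
    (A : Subring B) (hA : A = RingHom.eqLocus (σ : B →+* B) (RingHom.id B))
    (y : B) (hy : σ y ≠ y)
    (hgen : Ideal.span {x | ∃ b : B, x = σ b - b} = Ideal.span {σ y - y})
    (a : A) (c : Fin p → A)
    (hdvd : (a : B) ∣ ∑ i : Fin p, (c i : B) * y ^ (i : ℕ)) :
    ∀ i : Fin p, a ∣ c i := by
  classical
  subst hA
  set f : B[X] := ofFn p fun i => (c i : B)
  have hfix : ∀ n, σ (f.coeff n) = f.coeff n := by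
    intro n
    rcases lt_or_ge n p with h | h
    · rw [ofFn_coeff_eq_val_of_lt _ h]
      exact (c _).2
    · rw [ofFn_coeff_eq_zero_of_ge _ h, map_zero]
  have heval : f.eval y = ∑ i : Fin p, (c i : B) * y ^ (i : ℕ) := by
    simp [f, ofFn_eq_sum_monomial, eval_finsetSum, eval_monomial]
  intro i
  refine RingHom.dvd_of_coe_dvd_eqLocus_id ?_
  rw [← ofFn_coeff_eq_val_of_lt (fun i => (c i : B)) i.2]
  exact RingEquiv.dvd_coeff_of_dvd_eval hp horder hy hgen hfix
    (ofFn_natDegree_lt hp.one_lt.le _) a.2 (heval ▸ hdvd) i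

/-- If `y` is an augmentation generator for a faithful `p`-cyclic action on a
normal local domain `B` and `a ∈ A = B^G` divides `a₀ + a₁y + … + a_{p−1}y^{p−1}`
in `B` with all `aᵢ ∈ A`, then `a` divides each `aᵢ` in `A`. -/
theorem dvd_coefficients_of_dvd_combination
    {B : Type*} [CommRing B] [IsDomain B] [IsIntegrallyClosed B] [IsLocalRing B]
    (p : ℕ) (hp : p.Prime) (σ : B ≃+* B) (horder : orderOf σ = p)
    (hloc : ∀ b ∈ IsLocalRing.maximalIdeal B, σ b ∈ IsLocalRing.maximalIdeal B)
    (A : Subring B) (hA : A = RingHom.eqLocus (σ : B →+* B) (RingHom.id B))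
    (y : B) (hy : σ y ≠ y)
    (hgen : Ideal.span {x | ∃ b : B, x = σ b - b} = Ideal.span {σ y - y})
    (a : A) (c : Fin p → A)
    (hdvd : (a : B) ∣ ∑ i : Fin p, (c i : B) * y ^ (i : ℕ)) :
    ∀ i : Fin p, a ∣ c i :=
  dvd_coefficients_of_dvd_combination_general p hp σ horder A hA y hy hgen a c hdvd
end

section
/- Let k be a field of characteristic p > 0 and B = k(Z)[Y, X₁, X₂] localized at (Y, X₁, X₂), with the order-p automorphism σ determined by σ(Z) = Z + X₁, σ(Y) = Y + X₂, σ(X_i) = X_i, σ|_k = id. Then σ acts on B by local automorphisms, G = ⟨σ⟩ acts as a pseudo-reflection (Y, X₁, X₂ with X₁, X₂ invariant), but the augmentation ideal I_G = B·X₁ + B·X₂ is not principal. -/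
/-- `k(Z)`, the rational function field over `k`. -/
noncomputable abbrev RatFunc' (k : Type) [Field k] := FractionRing (Polynomial k)

/-- `k(Z)[Y, X₁, X₂]`, the polynomial ring in the variables `Y = X 0`,
`X₁ = X 1`, `X₂ = X 2` over `k(Z)`. -/
noncomputable abbrev PolyS (k : Type) [Field k] := MvPolynomial (Fin 3) (RatFunc' k)

/-!
Over a local ring `L` which is a localization of `k(Z)[Y, X₁, X₂]`, the substitution
`Z ↦ Z + c₁`, `Y ↦ Y + c₂`, `Xᵢ ↦ Xᵢ` with `c₁, c₂` in the maximal ideal agrees with the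
identity modulo the maximal ideal, so it maps every element that becomes a unit in `L` to a unit.
It therefore extends from `k[Z]` to `k(Z)`, then to `k(Z)[Y, X₁, X₂]` and finally to `L`.
Taking `c = (X₁, X₂)` gives `σ`, with inverse the substitution for `c = (-X₁, -X₂)`; since `σⁿ`
shifts `Z` and `Y` by `n X₁` and `n X₂`, `σ^p = 1`. As `σ` is the identity modulo `(X₁, X₂)`,
the augmentation ideal is `(X₁, X₂)`. In a local ring a principal ideal `(a, b)` forces `a ∣ b`
or `b ∣ a`, whereas `X₁ ∤ X₂` in `L` because `(X₁)` is a prime ideal of the polynomial ring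
contained in `(Y, X₁, X₂)`.
-/

namespace IsLocalRing

variable {R : Type*} [CommRing R] [IsLocalRing R]

theorem dvd_or_dvd_of_isPrincipal_span_pair {a b : R} (h : (Ideal.span {a, b}).IsPrincipal) :
    a ∣ b ∨ b ∣ a := by
  obtain ⟨d, hd⟩ := h
  have hmem : ∀ x ∈ Ideal.span {a, b}, d ∣ x := fun x hx =>
    Ideal.mem_span_singleton'.mp (hd ▸ hx) |>.imp fun c hc => by rw [← hc, mul_comm]
  obtain ⟨c, rfl⟩ := hmem a (Ideal.subset_span (by simp))
  obtain ⟨c', rfl⟩ := hmem b (Ideal.subset_span (by simp))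
  obtain ⟨e, f, hef⟩ := Ideal.mem_span_pair.mp (hd ▸ Ideal.mem_span_singleton_self d :
    d ∈ Ideal.span {d * c, d * c'})
  by_cases hu : IsUnit (e * c + f * c')
  · rcases isUnit_or_isUnit_of_isUnit_add hu with hc | hc
    · exact .inl (mul_dvd_mul_left d ((isUnit_of_mul_isUnit_right hc).dvd))
    · exact .inr (mul_dvd_mul_left d ((isUnit_of_mul_isUnit_right hc).dvd))
  · have hd0 : d = 0 := by
      have h1 := isUnit_one_sub_self_of_mem_nonunits _ hu
      refine (h1.mul_left_eq_zero).mp ?_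
      linear_combination -hef
    simp [hd0]

theorem isUnit_of_residue_comp_eq {S : Type*} [Semiring S] {f g : S →+* R}
    (h : (residue R).comp f = (residue R).comp g) {s : S} (hs : IsUnit (g s)) : IsUnit (f s) := by
  rw [← residue_ne_zero_iff_isUnit] at hs ⊢
  rwa [← RingHom.comp_apply, h]

end IsLocalRing

theorem IsLocalization.algebraMap_dvd_algebraMap_iff_of_prime {R S : Type*} [CommRing R]
    [CommRing S] [Algebra R S] (M : Submonoid R) [IsLocalization M S] {x y : R} (hx : Prime x)
    (hM : Disjoint (M : Set R) (Ideal.span {x})) :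
    algebraMap R S x ∣ algebraMap R S y ↔ x ∣ y := by
  refine ⟨fun h => ?_, map_dvd _⟩
  have hy : y ∈ (Ideal.map (algebraMap R S) (Ideal.span {x})).under R := by
    rw [Ideal.map_span, Set.image_singleton]
    exact Ideal.mem_span_singleton.mpr h
  rwa [IsLocalization.under_map_of_isPrime_disjoint M S
    ((Ideal.span_singleton_prime hx.ne_zero).mpr hx) hM, Ideal.mem_span_singleton] at hy

namespace RingEquiv

theorem pow_apply_of_apply_eq_add {R : Type*} [Semiring R] {σ : R ≃+* R} {c x : R}
    (hc : σ c = c) (hx : σ x = x + c) (n : ℕ) : (σ ^ n) x = x + n • c := by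
  induction n with
  | zero => simp
  | succ n ih =>
    rw [pow_succ', RingAut.mul_apply, ih, map_add, map_nsmul, hx, hc, succ_nsmul', add_assoc]

theorem pow_apply_sub_mem {R : Type*} [Ring R] {σ : R ≃+* R} {J : Ideal R}
    (h : ∀ b, σ b - b ∈ J) (n : ℕ) (b : R) : (σ ^ n) b - b ∈ J := by
  induction n with
  | zero => simp
  | succ n ih =>
    rw [pow_succ', RingAut.mul_apply, ← sub_add_sub_cancel]
    exact J.add_mem (h _) ih

end RingEquiv

open MvPolynomial IsLocalRing

noncomputable section

namespace WildPseudoReflection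

variable {k : Type} [Field k] {L : Type*} [CommRing L] [Algebra (PolyS k) L]

variable (k L) in
abbrev polyHom : Polynomial k →+* L :=
  (algebraMap (PolyS k) L).comp (C.comp (algebraMap (Polynomial k) (RatFunc' k)))

theorem isUnit_polyHom {q : Polynomial k} (hq : q ≠ 0) : IsUnit (polyHom k L q) :=
  (isUnit_iff_ne_zero.mpr ((map_ne_zero_iff _ (IsFractionRing.injective _ _)).mpr hq)).map
    ((algebraMap (PolyS k) L).comp C)

theorem ringHom_ext (M : Submonoid (PolyS k)) [IsLocalization M L] {T : Type*} [Semiring T]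
    {f g : L →+* T}
    (hC : ∀ a : k,
      f (algebraMap (PolyS k) L (C (algebraMap (Polynomial k) (RatFunc' k) (Polynomial.C a)))) =
        g (algebraMap (PolyS k) L (C (algebraMap (Polynomial k) (RatFunc' k) (Polynomial.C a)))))
    (hZ : f (algebraMap (PolyS k) L (C (algebraMap (Polynomial k) (RatFunc' k) Polynomial.X))) =
      g (algebraMap (PolyS k) L (C (algebraMap (Polynomial k) (RatFunc' k) Polynomial.X))))
    (hX : ∀ i, f (algebraMap (PolyS k) L (X i)) = g (algebraMap (PolyS k) L (X i))) : f = g := by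
  have hK : f.comp ((algebraMap (PolyS k) L).comp C) = g.comp ((algebraMap (PolyS k) L).comp C) :=
    IsLocalization.ringHom_ext (nonZeroDivisors (Polynomial k)) (Polynomial.ringHom_ext hC hZ)
  exact IsLocalization.ringHom_ext M (MvPolynomial.ringHom_ext (RingHom.congr_fun hK) hX)

section Twist

variable [IsLocalRing L] {c₁ : L} (hc₁ : c₁ ∈ maximalIdeal L) {c₂ : L}
  (hc₂ : c₂ ∈ maximalIdeal L)

def twistPoly (c₁ : L) : Polynomial k →+* L :=
  Polynomial.eval₂RingHom ((polyHom k L).comp Polynomial.C) (polyHom k L Polynomial.X + c₁)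

include hc₁ in
theorem residue_comp_twistPoly :
    (residue L).comp (twistPoly (k := k) c₁) = (residue L).comp (polyHom k L) := by
  refine Polynomial.ringHom_ext (fun a => by simp [twistPoly]) ?_
  simp [twistPoly, (residue_eq_zero_iff c₁).mpr hc₁]

def twistCoeff (hc₁ : c₁ ∈ maximalIdeal L) : RatFunc' k →+* L :=
  IsLocalization.lift (M := nonZeroDivisors (Polynomial k)) (g := twistPoly c₁) fun q =>
    isUnit_of_residue_comp_eq (residue_comp_twistPoly hc₁)
      (isUnit_polyHom (nonZeroDivisors.ne_zero q.2))

theorem residue_comp_twistCoeff :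
    (residue L).comp (twistCoeff (k := k) hc₁) =
      (residue L).comp ((algebraMap (PolyS k) L).comp C) :=
  IsLocalization.ringHom_ext (nonZeroDivisors (Polynomial k)) <| by
    rw [RingHom.comp_assoc, twistCoeff, IsLocalization.lift_comp, residue_comp_twistPoly hc₁]
    rfl

def twistPolyS (hc₁ : c₁ ∈ maximalIdeal L) (c₂ : L) : PolyS k →+* L :=
  eval₂Hom (twistCoeff hc₁)
    ![algebraMap (PolyS k) L (X 0) + c₂, algebraMap (PolyS k) L (X 1),
      algebraMap (PolyS k) L (X 2)]

include hc₂ in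
theorem residue_comp_twistPolyS :
    (residue L).comp (twistPolyS (k := k) hc₁ c₂) =
      (residue L).comp (algebraMap (PolyS k) L) := by
  refine MvPolynomial.ringHom_ext (fun r => ?_) (fun i => ?_)
  · simpa [twistPolyS] using RingHom.congr_fun (residue_comp_twistCoeff hc₁) r
  · fin_cases i <;> simp [twistPolyS, (residue_eq_zero_iff c₂).mpr hc₂]

variable (M : Submonoid (PolyS k)) [IsLocalization M L]

def twist (hc₁ : c₁ ∈ maximalIdeal L) (hc₂ : c₂ ∈ maximalIdeal L) : L →+* L :=
  IsLocalization.lift (M := M) (g := twistPolyS hc₁ c₂) fun s =>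
    isUnit_of_residue_comp_eq (residue_comp_twistPolyS hc₁ hc₂) (IsLocalization.map_units _ s)

theorem twist_algebraMap (a : PolyS k) :
    twist M hc₁ hc₂ (algebraMap (PolyS k) L a) = twistPolyS hc₁ c₂ a :=
  IsLocalization.lift_eq _ a

@[simp]
theorem twist_const (a : k) :
    twist M hc₁ hc₂
        (algebraMap (PolyS k) L (C (algebraMap (Polynomial k) (RatFunc' k) (Polynomial.C a)))) =
      algebraMap (PolyS k) L (C (algebraMap (Polynomial k) (RatFunc' k) (Polynomial.C a))) := by
  simp [twist_algebraMap, twistPolyS, twistCoeff, twistPoly]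

@[simp]
theorem twist_Z :
    twist M hc₁ hc₂
        (algebraMap (PolyS k) L (C (algebraMap (Polynomial k) (RatFunc' k) Polynomial.X))) =
      algebraMap (PolyS k) L (C (algebraMap (Polynomial k) (RatFunc' k) Polynomial.X)) + c₁ := by
  simp [twist_algebraMap, twistPolyS, twistCoeff, twistPoly]

@[simp]
theorem twist_X_zero :
    twist M hc₁ hc₂ (algebraMap (PolyS k) L (X 0)) = algebraMap (PolyS k) L (X 0) + c₂ := by
  simp [twist_algebraMap, twistPolyS]

@[simp]
theorem twist_X_one :
    twist M hc₁ hc₂ (algebraMap (PolyS k) L (X 1)) = algebraMap (PolyS k) L (X 1) := by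
  simp [twist_algebraMap, twistPolyS]

@[simp]
theorem twist_X_two :
    twist M hc₁ hc₂ (algebraMap (PolyS k) L (X 2)) = algebraMap (PolyS k) L (X 2) := by
  simp [twist_algebraMap, twistPolyS]

theorem twist_comp_twist_eq_id {b₁ b₂ : L} (hb₁ : b₁ ∈ maximalIdeal L)
    (hb₂ : b₂ ∈ maximalIdeal L)
    (hfix₁ : twist M hc₁ hc₂ b₁ = b₁) (hfix₂ : twist M hc₁ hc₂ b₂ = b₂)
    (hsum₁ : c₁ + b₁ = 0) (hsum₂ : c₂ + b₂ = 0) :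
    (twist M hc₁ hc₂).comp (twist M hb₁ hb₂) = RingHom.id L := by
  refine ringHom_ext M (fun a => by simp) ?_ fun i => ?_
  · simp [hfix₁, add_assoc, hsum₁]
  · fin_cases i <;> simp [hfix₂, add_assoc, hsum₂]

end Twist

variable {m : Ideal (PolyS k)}

theorem X_mem_of_eq_span (hm : m = Ideal.span {X 0, X 1, X 2}) (i : Fin 3) : X i ∈ m :=
  hm ▸ Ideal.subset_span (by fin_cases i <;> simp)

variable [m.IsPrime] [IsLocalization.AtPrime L m]

variable (L m) in
include m in
theorem algebraMap_X_ne_zero (i : Fin 3) : algebraMap (PolyS k) L (X i) ≠ 0 :=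
  (map_ne_zero_iff _ (IsLocalization.injective L (Ideal.primeCompl_le_nonZeroDivisors m))).mpr
    (X_ne_zero i)

variable [IsLocalRing L] (hm : m = Ideal.span {X 0, X 1, X 2})

include hm in
theorem algebraMap_X_mem_maximalIdeal (i : Fin 3) :
    algebraMap (PolyS k) L (X i) ∈ maximalIdeal L :=
  (IsLocalization.AtPrime.to_map_mem_maximal_iff L m _ ‹_›).mpr (X_mem_of_eq_span hm i)

variable (L) in
def sigma (hm : m = Ideal.span {X 0, X 1, X 2}) : L ≃+* L :=
  RingEquiv.ofRingHom
    (twist m.primeCompl (algebraMap_X_mem_maximalIdeal hm 1) (algebraMap_X_mem_maximalIdeal hm 2))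
    (twist m.primeCompl (neg_mem (algebraMap_X_mem_maximalIdeal hm 1))
      (neg_mem (algebraMap_X_mem_maximalIdeal hm 2)))
    (twist_comp_twist_eq_id _ _ _ _ _ (by simp) (by simp) (add_neg_cancel _) (add_neg_cancel _))
    (twist_comp_twist_eq_id _ _ _ _ _ (by simp) (by simp) (neg_add_cancel _) (neg_add_cancel _))

@[simp]
theorem sigma_const (a : k) :
    sigma L hm
        (algebraMap (PolyS k) L (C (algebraMap (Polynomial k) (RatFunc' k) (Polynomial.C a)))) =
      algebraMap (PolyS k) L (C (algebraMap (Polynomial k) (RatFunc' k) (Polynomial.C a))) :=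
  twist_const (algebraMap_X_mem_maximalIdeal hm 1) (algebraMap_X_mem_maximalIdeal hm 2) _ a

@[simp]
theorem sigma_Z :
    sigma L hm (algebraMap (PolyS k) L (C (algebraMap (Polynomial k) (RatFunc' k) Polynomial.X))) =
      algebraMap (PolyS k) L (C (algebraMap (Polynomial k) (RatFunc' k) Polynomial.X)) +
        algebraMap (PolyS k) L (X 1) :=
  twist_Z (algebraMap_X_mem_maximalIdeal hm 1) (algebraMap_X_mem_maximalIdeal hm 2) _

@[simp]
theorem sigma_X_zero :
    sigma L hm (algebraMap (PolyS k) L (X 0)) =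
      algebraMap (PolyS k) L (X 0) + algebraMap (PolyS k) L (X 2) :=
  twist_X_zero (algebraMap_X_mem_maximalIdeal hm 1) (algebraMap_X_mem_maximalIdeal hm 2) _

@[simp]
theorem sigma_X_one : sigma L hm (algebraMap (PolyS k) L (X 1)) = algebraMap (PolyS k) L (X 1) :=
  twist_X_one (algebraMap_X_mem_maximalIdeal hm 1) (algebraMap_X_mem_maximalIdeal hm 2) _

@[simp]
theorem sigma_X_two : sigma L hm (algebraMap (PolyS k) L (X 2)) = algebraMap (PolyS k) L (X 2) :=
  twist_X_two (algebraMap_X_mem_maximalIdeal hm 1) (algebraMap_X_mem_maximalIdeal hm 2) _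

theorem sigma_pow_char (p : ℕ) [CharP k p] : sigma L hm ^ p = 1 := by
  have hp : (p : L) = 0 := by
    rw [← map_natCast ((polyHom k L).comp Polynomial.C) p, CharP.cast_eq_zero, map_zero]
  have hfix {x : L} (hx : sigma L hm x = x) : (sigma L hm ^ p) x = x := by
    rw [RingAut.coe_pow]
    exact Function.iterate_fixed hx p
  have hshift {c x : L} (hc : sigma L hm c = c) (hx : sigma L hm x = x + c) :
      (sigma L hm ^ p) x = x := by
    rw [RingEquiv.pow_apply_of_apply_eq_add hc hx, nsmul_eq_mul, hp, zero_mul, add_zero]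
  suffices (sigma L hm ^ p).toRingHom = RingHom.id L from RingEquiv.ext (RingHom.congr_fun this)
  refine ringHom_ext m.primeCompl (fun a => hfix (sigma_const hm a))
    (hshift (sigma_X_one hm) (sigma_Z hm)) fun i => ?_
  fin_cases i
  exacts [hshift (sigma_X_two hm) (sigma_X_zero hm), hfix (sigma_X_one hm), hfix (sigma_X_two hm)]

theorem orderOf_sigma {p : ℕ} (hp : p.Prime) [CharP k p] : orderOf (sigma L hm) = p := by
  have : Fact p.Prime := ⟨hp⟩
  refine orderOf_eq_prime (sigma_pow_char hm p) fun h => algebraMap_X_ne_zero L m 2 ?_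
  simpa [h] using (sigma_X_zero (L := L) hm).symm

theorem sigma_apply_sub_mem (b : L) :
    sigma L hm b - b ∈
      Ideal.span {algebraMap (PolyS k) L (X 1), algebraMap (PolyS k) L (X 2)} := by
  set J := Ideal.span {algebraMap (PolyS k) L (X 1), algebraMap (PolyS k) L (X 2)}
  have h₁ : Ideal.Quotient.mk J (algebraMap (PolyS k) L (X 1)) = 0 :=
    Ideal.Quotient.eq_zero_iff_mem.mpr (Ideal.subset_span (by simp))
  have h₂ : Ideal.Quotient.mk J (algebraMap (PolyS k) L (X 2)) = 0 :=
    Ideal.Quotient.eq_zero_iff_mem.mpr (Ideal.subset_span (by simp))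
  have : (Ideal.Quotient.mk J).comp (sigma L hm : L →+* L) = Ideal.Quotient.mk J :=
    ringHom_ext m.primeCompl (by simp) (by simp [h₁]) fun i => by fin_cases i <;> simp [h₂]
  exact Ideal.Quotient.eq.mp (RingHom.congr_fun this b)

theorem span_sigma_pow_sub_eq :
    Ideal.span {x | ∃ (n : ℕ) (b : L), x = (sigma L hm ^ n) b - b} =
      Ideal.span {algebraMap (PolyS k) L (X 1), algebraMap (PolyS k) L (X 2)} := by
  refine le_antisymm (Ideal.span_le.mpr ?_) (Ideal.span_le.mpr ?_)
  · rintro _ ⟨n, b, rfl⟩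
    exact RingEquiv.pow_apply_sub_mem (sigma_apply_sub_mem hm) n b
  · rintro _ (rfl | rfl)
    exacts [Ideal.subset_span ⟨1,
      algebraMap (PolyS k) L (C (algebraMap (Polynomial k) (RatFunc' k) Polynomial.X)), by simp⟩,
      Ideal.subset_span ⟨1, algebraMap (PolyS k) L (X 0), by simp⟩]

include hm in
theorem span_X_eq_maximalIdeal :
    Ideal.span {algebraMap (PolyS k) L (X 0), algebraMap (PolyS k) L (X 1),
      algebraMap (PolyS k) L (X 2)} = maximalIdeal L := by
  rw [← IsLocalization.AtPrime.map_eq_maximalIdeal m, hm, Ideal.map_span]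
  simp [Set.image_insert_eq]

include hm in
theorem not_isPrincipal_span_X_one_X_two :
    ¬ (Ideal.span {algebraMap (PolyS k) L (X 1), algebraMap (PolyS k) L (X 2)}).IsPrincipal := by
  have hndvd {i j : Fin 3} (hij : i ≠ j) :
      ¬ algebraMap (PolyS k) L (X i) ∣ algebraMap (PolyS k) L (X j) := by
    rw [IsLocalization.algebraMap_dvd_algebraMap_iff_of_prime m.primeCompl X_prime, X_dvd_X]
    · exact hij
    · exact Set.disjoint_left.mpr fun s hs hsX =>
        hs ((Ideal.span_singleton_le_iff_mem m).mpr (X_mem_of_eq_span hm i) hsX)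
  intro h
  rcases IsLocalRing.dvd_or_dvd_of_isPrincipal_span_pair h with h | h
  exacts [hndvd (by decide) h, hndvd (by decide) h]

end WildPseudoReflection

end

open MvPolynomial IsLocalRing in
/-- The example: over `B = k(Z)[Y, X₁, X₂]` localized at `(Y, X₁, X₂)` (with `k`
of characteristic `p > 0`), the order-`p` automorphism `σ` with `σ(Z) = Z + X₁`,
`σ(Y) = Y + X₂`, `σ(Xᵢ) = Xᵢ`, `σ|k = id` acts by local automorphisms, acts as a
pseudo-reflection, but its augmentation ideal `I_G = B·X₁ + B·X₂` is not
principal. -/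
theorem wild_pseudo_reflection_example
    (k : Type) [Field k] (p : ℕ) (hp : p.Prime) [CharP k p]
    (m : Ideal (PolyS k)) (hm : m = Ideal.span {X 0, X 1, X 2}) [m.IsPrime]
    (φ : PolyS k →+* Localization.AtPrime m)
    (hφ : φ = algebraMap (PolyS k) (Localization.AtPrime m)) :
    ∃ σ : Localization.AtPrime m ≃+* Localization.AtPrime m,
      -- σ fixes (the image of) k
      (∀ c : k, σ (φ (C (algebraMap (Polynomial k) (RatFunc' k) (Polynomial.C c)))) =
        φ (C (algebraMap (Polynomial k) (RatFunc' k) (Polynomial.C c)))) ∧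
      -- σ(Z) = Z + X₁
      σ (φ (C (algebraMap (Polynomial k) (RatFunc' k) Polynomial.X))) =
        φ (C (algebraMap (Polynomial k) (RatFunc' k) Polynomial.X)) + φ (X 1) ∧
      -- σ(Y) = Y + X₂, σ(X₁) = X₁, σ(X₂) = X₂
      σ (φ (X 0)) = φ (X 0) + φ (X 2) ∧
      σ (φ (X 1)) = φ (X 1) ∧
      σ (φ (X 2)) = φ (X 2) ∧
      -- σ has order p
      orderOf σ = p ∧
      -- σ is a local automorphism
      (∀ b ∈ maximalIdeal (Localization.AtPrime m),
        σ b ∈ maximalIdeal (Localization.AtPrime m)) ∧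
      -- pseudo-reflection: (Y, X₁, X₂) is a system of parameters, X₁, X₂ invariant
      Ideal.span {φ (X 0), φ (X 1), φ (X 2)} = maximalIdeal (Localization.AtPrime m) ∧
      -- the augmentation ideal equals B·X₁ + B·X₂ and is not principal
      Ideal.span {x | ∃ (n : ℕ) (b : Localization.AtPrime m), x = (σ ^ n) b - b} =
        Ideal.span {φ (X 1), φ (X 2)} ∧
      ¬ (Ideal.span
          {x | ∃ (n : ℕ) (b : Localization.AtPrime m), x = (σ ^ n) b - b}).IsPrincipal := by
  subst hφ
  refine ⟨WildPseudoReflection.sigma (Localization.AtPrime m) hm,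
    WildPseudoReflection.sigma_const hm, WildPseudoReflection.sigma_Z hm,
    WildPseudoReflection.sigma_X_zero hm, WildPseudoReflection.sigma_X_one hm,
    WildPseudoReflection.sigma_X_two hm, WildPseudoReflection.orderOf_sigma hm hp,
    fun b hb => ?_, WildPseudoReflection.span_X_eq_maximalIdeal (L := Localization.AtPrime m) hm,
    WildPseudoReflection.span_sigma_pow_sub_eq hm, ?_⟩
  · exact (map_mem_nonunits_iff _ b).mpr hb
  · rw [WildPseudoReflection.span_sigma_pow_sub_eq hm]
    exact WildPseudoReflection.not_isPrincipal_span_X_one_X_two hm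
end
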